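/- arXiv:dg-ga/9712005 — 3 statements merged into one kernel-verified Lean document; each statement's English description precedes it below -/
import Mathlib

section
/- For every natural number d and all real numbers n′, n″, δ, one has ∑_{u=0}^{d} 2^u · C(-n″, d-u) · C(δ-n′, u) = (-2)^d · P^{a,b}_d(0), where a = n″ + n′ - δ - 1 and b = δ - n′ - d. -/
/-- The generalized binomial coefficient `C(a,k) = a(a-1)⋯(a-k+1)/k!`, with `C(a,0) = 1`. -/
noncomputable def gchoose (a : ℝ) (k : ℕ) : ℝ :=
  (∏ i ∈ Finset.range k, (a - i)) / (k.factorial : ℝ)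

/-- The Jacobi polynomial
`P^{a,b}_n(ξ) = 2^{-n} ∑_{k=0}^{n} C(a+n, n-k) · C(n+b, k) · (ξ-1)^k (ξ+1)^{n-k}`. -/
noncomputable def jacobiP (a b : ℝ) (n : ℕ) (ξ : ℝ) : ℝ :=
  ((2 : ℝ) ^ n)⁻¹ * ∑ k ∈ Finset.range (n + 1),
    gchoose (a + n) (n - k) * gchoose ((n : ℝ) + b) k * (ξ - 1) ^ k * (ξ + 1) ^ (n - k)

/-!
Expanding `2 ^ u = ∑ₖ C(u,k)` and using `C(u,k) C(x,u) = C(x,k) C(x-k,u-k)`, the sum over `u`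
collapses by Vandermonde's identity to `∑ₖ C(x,k) C(x-k+y,d-k)`, an identity valid in any binomial
ring. Upper negation `C(-r,m) = (-1)^m C(r+m-1,m)` turns this into the alternating sum
`(-1)^d ∑ₖ (-1)^k C(a+d,d-k) C(b+d,k) = (-2)^d P^{a,b}_d(0)`.
-/

open Finset Polynomial

namespace Ring

variable {R : Type*} [CommRing R] [BinomialRing R]

theorem choose_neg_eq_neg_one_pow_mul (r : R) (n : ℕ) :
    choose (-r) n = (-1) ^ n * choose (r + n - 1) n := by
  rw [choose_neg, Units.smul_def, zsmul_eq_mul, Int.coe_negOnePow_natCast, Int.cast_pow,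
    Int.cast_neg, Int.cast_one]

theorem sum_range_choose_mul_choose_sub (r s : R) (n : ℕ) :
    ∑ j ∈ range (n + 1), choose r j * choose s (n - j) = choose (r + s) n := by
  rw [add_choose_eq n (Commute.all r s), Nat.sum_antidiagonal_eq_sum_range_succ_mk]

theorem two_pow_mul_choose (x : R) (u : ℕ) :
    2 ^ u * choose x u = ∑ k ∈ range (u + 1), choose x k * choose (x - k) (u - k) := by
  have h : (2 : R) ^ u = ∑ k ∈ range (u + 1), (u.choose k : R) := by
    simpa using congrArg (Nat.cast (R := R)) (Nat.sum_range_choose u).symm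
  rw [h, sum_mul]
  refine sum_congr rfl fun k hk => ?_
  rw [← choose_smul_choose x (Nat.lt_succ_iff.mp (mem_range.mp hk)), nsmul_eq_mul]

theorem sum_two_pow_mul_choose_mul_choose (x y : R) (d : ℕ) :
    ∑ u ∈ range (d + 1), 2 ^ u * choose y (d - u) * choose x u
      = ∑ k ∈ range (d + 1), choose x k * choose (x - k + y) (d - k) := by
  simp_rw [mul_right_comm _ (choose y _), two_pow_mul_choose, sum_mul, range_eq_Ico,
    ← sum_Ico_Ico_comm]
  refine sum_congr rfl fun k hk => ?_
  have hkd : k ≤ d := Nat.lt_succ_iff.mp (mem_Ico.mp hk).2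
  rw [← sum_range_choose_mul_choose_sub, mul_sum, sum_Ico_eq_sum_range,
    show d + 1 - k = d - k + 1 by omega]
  refine sum_congr rfl fun j _ => ?_
  rw [show k + j - k = j by omega, show d - (k + j) = d - k - j by omega, mul_assoc]

end Ring

theorem gchoose_eq_ringChoose (a : ℝ) (k : ℕ) : gchoose a k = Ring.choose a k := by
  rw [Ring.choose_eq_smul, ← aeval_eq_smeval, aeval_def, ← eval_map, descPochhammer_map,
    descPochhammer_eval_eq_prod_range, smul_eq_mul, gchoose, div_eq_inv_mul]

theorem neg_two_pow_mul_jacobiP_zero (a b : ℝ) (d : ℕ) :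
    (-2) ^ d * jacobiP a b d 0
      = ∑ k ∈ range (d + 1), gchoose (d + b) k * ((-1) ^ (d - k) * gchoose (a + d) (d - k)) := by
  rw [jacobiP, ← mul_assoc, neg_pow, mul_inv_cancel_right₀ (by positivity), mul_sum]
  refine sum_congr rfl fun k hk => ?_
  have hkd : k ≤ d := Nat.lt_succ_iff.mp (mem_range.mp hk)
  have hsign : (-1 : ℝ) ^ d * (-1) ^ k = (-1) ^ (d - k) := by
    rw [← Nat.sub_add_cancel hkd, pow_add, mul_assoc, ← pow_add, Even.neg_one_pow ⟨k, rfl⟩,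
      mul_one, Nat.add_sub_cancel]
  rw [zero_sub, zero_add, one_pow, mul_one, ← hsign]
  ring

/-- The paper's lemma expressing the combinatorial sum arising from the Segre-class
computation of the Seiberg-Witten link pairing in terms of a Jacobi polynomial at `0`:
`∑_{u=0}^{d} 2^u · C(-n″, d-u) · C(δ-n′, u) = (-2)^d · P^{a,b}_d(0)` where
`a = n″ + n′ - δ - 1` and `b = δ - n′ - d`. -/
theorem sum_eq_neg_two_pow_mul_jacobiP (d : ℕ) (n' n'' δ : ℝ) :
    ∑ u ∈ Finset.range (d + 1),
        2 ^ u * gchoose (-n'') (d - u) * gchoose (δ - n') u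
      = (-2 : ℝ) ^ d * jacobiP (n'' + n' - δ - 1) (δ - n' - d) d 0 := by
  rw [neg_two_pow_mul_jacobiP_zero]
  simp only [gchoose_eq_ringChoose]
  rw [Ring.sum_two_pow_mul_choose_mul_choose]
  refine sum_congr rfl fun k hk => ?_
  have hkd : k ≤ d := Nat.lt_succ_iff.mp (mem_range.mp hk)
  rw [show δ - n' - k + -n'' = -(n'' + n' - δ + k) by ring, Ring.choose_neg_eq_neg_one_pow_mul,
    Nat.cast_sub hkd]
  ring_nf
end

section
/- For every natural number d and all real numbers n′, n″, δ, one has ∑_{i=0}^{d} ∑_{j=0}^{d-i} 2^{i+j} · C(δ, i) · C(-n′, j) · C(-n″, d-i-j) = (-2)^d · P^{a,b}_d(0), where a = n″ + n′ - δ - 1 and b = δ - n′ - d. -/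
lemma gchoose_succ (a : ℝ) (k : ℕ) :
    gchoose a (k + 1) = gchoose a k * (a - k) / (k + 1) := by
  unfold gchoose
  rw [Finset.prod_range_succ, Nat.factorial_succ, div_mul_eq_mul_div, div_div]
  push_cast
  rw [mul_comm ((k:ℝ) + 1)]

lemma gchoose_natCast (m k : ℕ) : gchoose (m : ℝ) k = (m.choose k : ℝ) := by
  induction k with
  | zero => simp [gchoose]
  | succ k ih =>
    rw [gchoose_succ, ih]
    rcases le_or_gt (k + 1) m with h | h
    · have hk : k ≤ m := by omega
      have h2 : (m.choose (k+1) : ℝ) * (k+1) = (m.choose k : ℝ) * ((m:ℝ) - (k:ℝ)) := by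
        calc (m.choose (k+1) : ℝ) * (k+1) = ((m.choose (k+1) * (k+1) : ℕ) : ℝ) := by
              push_cast; ring
          _ = ((m.choose k * (m - k) : ℕ) : ℝ) := by rw [Nat.choose_succ_right_eq]
          _ = _ := by push_cast [Nat.cast_sub hk]; ring
      rw [div_eq_iff (by positivity : ((k:ℝ) + 1) ≠ 0)]
      linarith
    · have h1 : m.choose (k+1) = 0 := Nat.choose_eq_zero_of_lt h
      rcases Nat.lt_succ_iff_lt_or_eq.mp h with h2 | h2
      · have : m.choose k = 0 := Nat.choose_eq_zero_of_lt h2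
        simp [h1, this]
      · subst h2
        simp [h1]

noncomputable def gPoly (k : ℕ) : Polynomial ℝ :=
  Polynomial.C ((k.factorial : ℝ))⁻¹ * ∏ i ∈ Finset.range k, (Polynomial.X - Polynomial.C (i : ℝ))

lemma gPoly_eval (x : ℝ) (k : ℕ) : (gPoly k).eval x = gchoose x k := by
  simp [gPoly, gchoose, Polynomial.eval_prod, div_eq_inv_mul]

lemma poly_zero_of_nat_roots (p : Polynomial ℝ) (h : ∀ m : ℕ, p.eval (m : ℝ) = 0) : p = 0 := by
  apply Polynomial.eq_zero_of_infinite_isRoot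
  apply Set.infinite_of_injective_forall_mem (f := (Nat.cast : ℕ → ℝ)) Nat.cast_injective
  exact fun m => h m

lemma vandermonde_nat (m l : ℕ) (n : ℕ) :
    gchoose ((m : ℝ) + l) n = ∑ k ∈ Finset.range (n + 1), gchoose m k * gchoose l (n - k) := by
  have : ((m : ℝ) + l) = ((m + l : ℕ) : ℝ) := by push_cast; ring
  rw [this, gchoose_natCast]
  have := Nat.add_choose_eq m l n
  rw [Finset.Nat.sum_antidiagonal_eq_sum_range_succ_mk] at this
  rw [this]
  push_cast
  exact Finset.sum_congr rfl fun k _ => by rw [gchoose_natCast, gchoose_natCast]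

lemma vandermonde_nat_real (m : ℕ) (y : ℝ) (n : ℕ) :
    gchoose ((m : ℝ) + y) n = ∑ k ∈ Finset.range (n + 1), gchoose m k * gchoose y (n - k) := by
  have hp : (gPoly n).comp (Polynomial.C (m : ℝ) + Polynomial.X)
      - ∑ k ∈ Finset.range (n + 1), Polynomial.C (gchoose m k) * gPoly (n - k) = 0 := by
    apply poly_zero_of_nat_roots
    intro l
    simp only [Polynomial.eval_sub, Polynomial.eval_comp, Polynomial.eval_add,
      Polynomial.eval_C, Polynomial.eval_X, Polynomial.eval_finset_sum, Polynomial.eval_mul,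
      gPoly_eval]
    rw [vandermonde_nat m l n]
    ring
  have := congrArg (Polynomial.eval y) hp
  simp only [Polynomial.eval_sub, Polynomial.eval_comp, Polynomial.eval_add,
    Polynomial.eval_C, Polynomial.eval_X, Polynomial.eval_finset_sum, Polynomial.eval_mul,
    gPoly_eval, Polynomial.eval_zero] at this
  linarith [this]

lemma vandermonde (x y : ℝ) (n : ℕ) :
    gchoose (x + y) n = ∑ k ∈ Finset.range (n + 1), gchoose x k * gchoose y (n - k) := by
  have hp : (gPoly n).comp (Polynomial.X + Polynomial.C y)
      - ∑ k ∈ Finset.range (n + 1), gPoly k * Polynomial.C (gchoose y (n - k)) = 0 := by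
    apply poly_zero_of_nat_roots
    intro m
    simp only [Polynomial.eval_sub, Polynomial.eval_comp, Polynomial.eval_add,
      Polynomial.eval_C, Polynomial.eval_X, Polynomial.eval_finset_sum, Polynomial.eval_mul,
      gPoly_eval]
    rw [vandermonde_nat_real m y n]
    ring
  have := congrArg (Polynomial.eval x) hp
  simp only [Polynomial.eval_sub, Polynomial.eval_comp, Polynomial.eval_add,
    Polynomial.eval_C, Polynomial.eval_X, Polynomial.eval_finset_sum, Polynomial.eval_mul,
    gPoly_eval, Polynomial.eval_zero] at this
  linarith [this]

lemma gchoose_reflect (z : ℝ) (m : ℕ) :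
    (-1 : ℝ) ^ m * gchoose z m = gchoose ((m : ℝ) - 1 - z) m := by
  unfold gchoose
  rw [← mul_div_assoc]
  congr 1
  calc (-1 : ℝ) ^ m * ∏ i ∈ Finset.range m, (z - i)
      = ∏ i ∈ Finset.range m, (-(z - i)) := by
        have hc : ((-1 : ℝ)) ^ m = ∏ _i ∈ Finset.range m, (-1 : ℝ) := by
          rw [Finset.prod_const, Finset.card_range]
        rw [hc, ← Finset.prod_mul_distrib]
        exact Finset.prod_congr rfl fun i _ => by ring
    _ = ∏ i ∈ Finset.range m, (((m : ℝ) - 1 - z) - (m - 1 - i : ℕ)) := by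
        apply Finset.prod_congr rfl
        intro i hi
        have hi' : i < m := Finset.mem_range.mp hi
        have : ((m - 1 - i : ℕ) : ℝ) = (m : ℝ) - 1 - i := by
          have : m - 1 - i = m - 1 - i := rfl
          push_cast [Nat.cast_sub (by omega : i ≤ m - 1), Nat.cast_sub (by omega : 1 ≤ m)]
          ring
        rw [this]
        ring
    _ = ∏ i ∈ Finset.range m, (((m : ℝ) - 1 - z) - i) :=
        Finset.prod_range_reflect (fun i => ((m : ℝ) - 1 - z) - i) m

lemma gchoose_absorb (x : ℝ) {j s : ℕ} (h : j ≤ s) :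
    (s.choose j : ℝ) * gchoose x s = gchoose x j * gchoose (x - j) (s - j) := by
  unfold gchoose
  have hs : s = j + (s - j) := by omega
  have hprod : ∏ i ∈ Finset.range s, (x - i)
      = (∏ i ∈ Finset.range j, (x - i)) * ∏ i ∈ Finset.range (s - j), (x - (j : ℝ) - i) := by
    conv_lhs => rw [hs]
    rw [Finset.prod_range_add]
    congr 1
    apply Finset.prod_congr rfl
    intro i _
    push_cast
    ring
  rw [hprod]
  have hfac : (s.choose j : ℝ) * (j.factorial : ℝ) * ((s - j).factorial : ℝ) = (s.factorial : ℝ) := by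
    exact_mod_cast congrArg (Nat.cast : ℕ → ℝ) (Nat.choose_mul_factorial_mul_factorial h)
  field_simp
  rw [← hfac]
  ring

lemma sum_triangle (f : ℕ → ℕ → ℝ) (d : ℕ) :
    ∑ i ∈ Finset.range (d + 1), ∑ j ∈ Finset.range (d - i + 1), f i j
      = ∑ s ∈ Finset.range (d + 1), ∑ i ∈ Finset.range (s + 1), f i (s - i) := by
  induction d with
  | zero => simp
  | succ d ih =>
    rw [Finset.sum_range_succ (n := d + 1), Finset.sum_range_succ (n := d + 1)]
    have hstep : ∑ i ∈ Finset.range (d + 1), ∑ j ∈ Finset.range (d + 1 - i + 1), f i j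
        = (∑ i ∈ Finset.range (d + 1), ∑ j ∈ Finset.range (d - i + 1), f i j)
          + ∑ i ∈ Finset.range (d + 1), f i (d + 1 - i) := by
      rw [← Finset.sum_add_distrib]
      apply Finset.sum_congr rfl
      intro i hi
      have hi' : i ≤ d := by
        have := Finset.mem_range.mp hi; omega
      have h2 : d + 1 - i + 1 = (d - i + 1) + 1 := by omega
      rw [h2, Finset.sum_range_succ]
      have h3 : d - i + 1 = d + 1 - i := by omega
      rw [h3]
    rw [hstep, ih, Finset.sum_range_succ (n := d + 1)]
    simp only [Nat.sub_self]
    rw [Finset.sum_range_one]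
    ring


/-- The closed form for the coefficient `C_{χ,σ}` appearing in the paper's formula for the
pairing of μ-classes with the link of a top-level Seiberg-Witten stratum:
`∑_{i=0}^{d} ∑_{j=0}^{d-i} 2^{i+j} C(δ,i) C(-n′,j) C(-n″, d-i-j) = (-2)^d · P^{a,b}_d(0)`,
where `a = n″ + n′ - δ - 1` and `b = δ - n′ - d`. -/
theorem double_sum_eq_neg_two_pow_mul_jacobiP (d : ℕ) (n' n'' δ : ℝ) :
    ∑ i ∈ Finset.range (d + 1), ∑ j ∈ Finset.range (d - i + 1),
        2 ^ (i + j) * gchoose δ i * gchoose (-n') j * gchoose (-n'') (d - i - j)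
      = (-2 : ℝ) ^ d * jacobiP (n'' + n' - δ - 1) (δ - n' - d) d 0 := by
  set x : ℝ := δ - n' with hx
  set y : ℝ := -n'' with hy
  have step1 : ∑ i ∈ Finset.range (d + 1), ∑ j ∈ Finset.range (d - i + 1),
        2 ^ (i + j) * gchoose δ i * gchoose (-n') j * gchoose (-n'') (d - i - j)
      = ∑ s ∈ Finset.range (d + 1), 2 ^ s * gchoose x s * gchoose y (d - s) := by
    rw [sum_triangle (fun i j =>
      2 ^ (i + j) * gchoose δ i * gchoose (-n') j * gchoose (-n'') (d - i - j)) d]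
    apply Finset.sum_congr rfl
    intro s hs
    have hs' : s ≤ d := by have := Finset.mem_range.mp hs; omega
    have hterm : ∀ i ∈ Finset.range (s + 1),
        2 ^ (i + (s - i)) * gchoose δ i * gchoose (-n') (s - i)
            * gchoose (-n'') (d - i - (s - i))
          = 2 ^ s * (gchoose δ i * gchoose (-n') (s - i)) * gchoose y (d - s) := by
      intro i hi
      have hi' : i ≤ s := by have := Finset.mem_range.mp hi; omega
      have e1 : i + (s - i) = s := by omega
      have e2 : d - i - (s - i) = d - s := by omega
      rw [e1, e2, hy]
      ring
    rw [Finset.sum_congr rfl hterm, ← Finset.sum_mul, ← Finset.mul_sum,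
      ← vandermonde δ (-n') s]
    have : δ + -n' = x := by rw [hx]; ring
    rw [this]
  have step2 : ∑ s ∈ Finset.range (d + 1), 2 ^ s * gchoose x s * gchoose y (d - s)
      = ∑ s ∈ Finset.range (d + 1), ∑ j ∈ Finset.range (s + 1),
          gchoose x j * gchoose (x - j) (s - j) * gchoose y (d - j - (s - j)) := by
    apply Finset.sum_congr rfl
    intro s hs
    have h2 : (2 : ℝ) ^ s = ∑ j ∈ Finset.range (s + 1), (s.choose j : ℝ) := by
      exact_mod_cast (Nat.sum_range_choose s).symm
    rw [h2, Finset.sum_mul, Finset.sum_mul]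
    apply Finset.sum_congr rfl
    intro j hj
    have hj' : j ≤ s := by have := Finset.mem_range.mp hj; omega
    have e : d - j - (s - j) = d - s := by omega
    rw [e, gchoose_absorb x hj']
  have step3 : ∑ s ∈ Finset.range (d + 1), ∑ j ∈ Finset.range (s + 1),
          gchoose x j * gchoose (x - j) (s - j) * gchoose y (d - j - (s - j))
      = ∑ j ∈ Finset.range (d + 1), ∑ t ∈ Finset.range (d - j + 1),
          gchoose x j * gchoose (x - j) t * gchoose y (d - j - t) :=
    (sum_triangle (fun j t => gchoose x j * gchoose (x - j) t * gchoose y (d - j - t)) d).symm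
  have step4 : ∑ j ∈ Finset.range (d + 1), ∑ t ∈ Finset.range (d - j + 1),
          gchoose x j * gchoose (x - j) t * gchoose y (d - j - t)
      = ∑ j ∈ Finset.range (d + 1), gchoose x j * gchoose (x + y - j) (d - j) := by
    apply Finset.sum_congr rfl
    intro j _
    simp_rw [mul_assoc]
    rw [← Finset.mul_sum, ← vandermonde (x - j) y (d - j)]
    have : x - j + y = x + y - (j : ℝ) := by ring
    rw [this]
  rw [step1, step2, step3, step4]
  -- now the right-hand side
  unfold jacobiP
  rw [← mul_assoc]
  have hpow : (-2 : ℝ) ^ d * ((2 : ℝ) ^ d)⁻¹ = (-1 : ℝ) ^ d := by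
    rw [show (-2 : ℝ) = (-1) * 2 by norm_num, mul_pow, mul_assoc,
      mul_inv_cancel₀ (by positivity : (2 : ℝ) ^ d ≠ 0), mul_one]
  rw [hpow, Finset.mul_sum]
  apply Finset.sum_congr rfl
  intro k hk
  have hk' : k ≤ d := by have := Finset.mem_range.mp hk; omega
  have hsign : ((-1 : ℝ)) ^ d * (-1) ^ k = (-1 : ℝ) ^ (d - k) := by
    rw [← pow_add, show d + k = (d - k) + 2 * k by omega, pow_add, pow_mul]
    norm_num
  have hb : (d : ℝ) + (x - d) = x := by ring
  have key : (-1 : ℝ) ^ (d - k) * gchoose (n'' + n' - δ - 1 + d) (d - k)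
      = gchoose (x + y - k) (d - k) := by
    rw [gchoose_reflect]
    congr 1
    rw [hx, hy]
    push_cast [Nat.cast_sub hk']
    ring
  calc gchoose x k * gchoose (x + y - k) (d - k)
      = ((-1 : ℝ) ^ (d - k) * gchoose (n'' + n' - δ - 1 + d) (d - k)) * gchoose x k := by
        rw [key]; ring
    _ = (-1 : ℝ) ^ d * (gchoose (n'' + n' - δ - 1 + ↑d) (d - k) * gchoose (↑d + (x - ↑d)) k
          * (0 - 1) ^ k * (0 + 1) ^ (d - k)) := by
        rw [hb, ← hsign]
        norm_num
        ring
end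

section
/- Let d be a natural number and let x, y be real numbers such that (1-y-d)_u ≠ 0 for every natural number u with 1 ≤ u ≤ d. Then ∑_{u=0}^{d} 2^u · C(-y, d-u) · C(-x, u) = ((-1)^d (y)_d / d!) · ∑_{u=0}^{d} ((-d)_u · (x)_u · 2^u) / ((1-y-d)_u · u!). -/
/-- The ascending Pochhammer symbol `(a)_k = a(a+1)⋯(a+k-1)`, with `(a)_0 = 1`. -/
def ascPoch (a : ℝ) (k : ℕ) : ℝ := ∏ i ∈ Finset.range k, (a + i)

lemma prod_neg_eq (a : ℝ) (k : ℕ) :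
    (∏ i ∈ Finset.range k, (-a - (i : ℝ))) = (-1) ^ k * ascPoch a k := by
  unfold ascPoch
  rw [show ((-1 : ℝ) ^ k) = ∏ _i ∈ Finset.range k, (-1 : ℝ) by
    rw [Finset.prod_const, Finset.card_range], ← Finset.prod_mul_distrib]
  exact Finset.prod_congr rfl fun i _ => by ring

lemma ascPoch_add (a : ℝ) (m n : ℕ) :
    ascPoch a (m + n) = ascPoch a m * ascPoch (a + m) n := by
  unfold ascPoch
  rw [Finset.prod_range_add]
  congr 1
  exact Finset.prod_congr rfl fun i _ => by push_cast; ring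

lemma prod_cast_sub (u d : ℕ) (h : u ≤ d) :
    (∏ i ∈ Finset.range u, ((d : ℝ) - i)) = (d.descFactorial u : ℝ) := by
  induction u with
  | zero => simp
  | succ n ih =>
    rw [Finset.prod_range_succ, ih (by omega), Nat.descFactorial_succ]
    push_cast [Nat.cast_sub (by omega : n ≤ d)]
    ring

lemma ascPoch_neg_nat (u d : ℕ) (h : u ≤ d) :
    ascPoch (-(d : ℝ)) u = (-1) ^ u * (d.descFactorial u : ℝ) := by
  rw [← prod_cast_sub u d h]
  unfold ascPoch
  rw [show ((-1 : ℝ) ^ u) = ∏ _i ∈ Finset.range u, (-1 : ℝ) by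
    rw [Finset.prod_const, Finset.card_range], ← Finset.prod_mul_distrib]
  exact Finset.prod_congr rfl fun i _ => by ring

lemma ascPoch_reflect (y : ℝ) (u d : ℕ) (h : u ≤ d) :
    ascPoch (1 - y - d) u = (-1) ^ u * ascPoch (y + (d - u : ℕ)) u := by
  unfold ascPoch
  rw [← Finset.prod_range_reflect (fun j => (1 - y - d + j : ℝ)) u]
  rw [show ((-1 : ℝ) ^ u) = ∏ _i ∈ Finset.range u, (-1 : ℝ) by
    rw [Finset.prod_const, Finset.card_range], ← Finset.prod_mul_distrib]
  refine Finset.prod_congr rfl fun i hi => ?_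
  have hi' : i < u := Finset.mem_range.mp hi
  rw [Nat.cast_sub (by omega : i ≤ u - 1), Nat.cast_sub (by omega : 1 ≤ u),
    Nat.cast_sub h]
  push_cast
  ring

/-- The intermediate identity in the paper's proof of the Jacobi-polynomial formula for the
link-pairing coefficient, rewriting the binomial sum as a terminating Gauss hypergeometric sum:
if `(1-y-d)_u ≠ 0` for `1 ≤ u ≤ d`, then
`∑_{u=0}^{d} 2^u C(-y, d-u) C(-x, u)
  = ((-1)^d (y)_d / d!) · ∑_{u=0}^{d} ((-d)_u (x)_u 2^u)/((1-y-d)_u u!)`. -/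
theorem sum_eq_hypergeometric_sum (d : ℕ) (x y : ℝ)
    (hne : ∀ u : ℕ, 1 ≤ u → u ≤ d → ascPoch (1 - y - d) u ≠ 0) :
    ∑ u ∈ Finset.range (d + 1), 2 ^ u * gchoose (-y) (d - u) * gchoose (-x) u
      = ((-1 : ℝ) ^ d * ascPoch y d / (d.factorial : ℝ)) *
        ∑ u ∈ Finset.range (d + 1),
          (ascPoch (-(d : ℝ)) u * ascPoch x u * 2 ^ u) /
            (ascPoch (1 - y - d) u * (u.factorial : ℝ)) := by
  rw [Finset.mul_sum]
  refine Finset.sum_congr rfl fun u hu => ?_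
  have hud : u ≤ d := by
    have := Finset.mem_range.mp hu; omega
  set m := d - u with hm
  have hdm : d = m + u := by omega
  have hP : ascPoch (y + (m : ℕ)) u ≠ 0 := by
    rcases Nat.eq_zero_or_pos u with h0 | h1
    · subst h0; simp [ascPoch]
    · have := hne u h1 hud
      rw [ascPoch_reflect y u d hud] at this
      intro h; rw [h] at this; simp at this
  have hfd : ((d.factorial : ℝ)) = (m.factorial : ℝ) * (d.descFactorial u : ℝ) := by
    rw [← Nat.cast_mul, hm, Nat.factorial_mul_descFactorial hud]
  have key1 : gchoose (-y) m = (-1 : ℝ) ^ m * ascPoch y m / (m.factorial : ℝ) := by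
    unfold gchoose
    rw [show (∏ i ∈ Finset.range m, (-y - (i : ℝ))) = (-1) ^ m * ascPoch y m from
      prod_neg_eq y m]
  have key2 : gchoose (-x) u = (-1 : ℝ) ^ u * ascPoch x u / (u.factorial : ℝ) := by
    unfold gchoose
    rw [show (∏ i ∈ Finset.range u, (-x - (i : ℝ))) = (-1) ^ u * ascPoch x u from
      prod_neg_eq x u]
  rw [key1, key2, ascPoch_reflect y u d hud, ascPoch_neg_nat u d hud,
    show ascPoch y d = ascPoch y m * ascPoch (y + (m : ℕ)) u by
      rw [hdm, ascPoch_add]]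
  have hmf : (m.factorial : ℝ) ≠ 0 := Nat.cast_ne_zero.mpr m.factorial_ne_zero
  have huf : (u.factorial : ℝ) ≠ 0 := Nat.cast_ne_zero.mpr u.factorial_ne_zero
  have hdf : (d.factorial : ℝ) ≠ 0 := Nat.cast_ne_zero.mpr d.factorial_ne_zero
  have hdesc : ((d.descFactorial u : ℝ)) ≠ 0 :=
    Nat.cast_ne_zero.mpr (by rw [Ne, Nat.descFactorial_eq_zero_iff_lt]; omega)
  rw [hfd, show ((-1 : ℝ)) ^ d = (-1) ^ m * (-1) ^ u by rw [hdm, pow_add]]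
  generalize hPP : ascPoch (y + (m : ℕ) : ℝ) u = P at hP ⊢
  field_simp
end
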